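/- arXiv:math/9803096 — 2 statements merged into one kernel-verified Lean document; each statement's English description precedes it below -/
import Mathlib

section
/- Let p, q be integers with 0 < p < q and gcd(p,q) = 1. Then there exists a unique integer p′ with 0 ≤ p′ < q and p·p′ ≡ 1 (mod q). Moreover (Voronoi's formula) p′ ≡ 3 − 2p + 6·∑_{j=1}^{p−1} ⌊jq/p⌋² (mod q). -/
/-!
For `1 ≤ j < p` we have `p ⌊j q / p⌋ = j q - (j q mod p) ≡ -(j q mod p) (mod q)`, and since
`q` is invertible mod `p` the residues `j q mod p` run through `1, …, p - 1` once each. Hence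
`p² · 6 ∑ ⌊j q / p⌋² ≡ 6 ∑ j² = (p - 1) p (2p - 1) (mod q)`, and multiplying by `p'²`
gives `6 ∑ ⌊j q / p⌋² ≡ p' (2p² - 3p + 1) ≡ 2p - 3 + p' (mod q)`.
-/

open Finset

namespace Int

theorem six_mul_sum_Icc_sq {n : ℤ} (hn : 0 ≤ n) :
    6 * ∑ j ∈ Icc 1 n, j ^ 2 = n * (n + 1) * (2 * n + 1) := by
  induction n, hn using Int.leInduction with
  | base => rfl
  | succ n hn ih =>
    rw [← insert_Icc_right_eq_Icc_add_one (by omega), sum_insert (by simp), mul_add, ih]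
    ring

theorem existsUnique_mul_modEq_one {p q : ℤ} (hq : 0 < q) (hpq : gcd p q = 1) :
    ∃! p' : ℤ, 0 ≤ p' ∧ p' < q ∧ p * p' ≡ 1 [ZMOD q] := by
  obtain ⟨a, ha₀, haq, ha⟩ := existsUnique_equiv (gcdA p q) hq
  have hbezout : p * gcdA p q ≡ 1 [ZMOD q] := by
    have h := gcd_eq_gcd_ab p q
    rw [hpq, Nat.cast_one] at h
    exact modEq_iff_dvd.mpr ⟨gcdB p q, by linarith⟩
  have hpa : p * a ≡ 1 [ZMOD q] := (ha.mul_left p).trans hbezout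
  refine ⟨a, ⟨ha₀, haq, hpa⟩, fun b ⟨hb₀, hbq, hb⟩ => ?_⟩
  have hba : b ≡ a [ZMOD q] := by
    simpa [gcd_comm, hpq] using ModEq.cancel_left_div_gcd hq (hb.trans hpa.symm)
  rwa [ModEq, emod_eq_of_lt hb₀ hbq, emod_eq_of_lt ha₀ haq] at hba

theorem ModEq.cancel_right_of_gcd_eq_one {p q a b : ℤ} (hp : 0 < p) (hpq : gcd p q = 1)
    (h : a * q ≡ b * q [ZMOD p]) : a ≡ b [ZMOD p] := by
  simpa [hpq] using ModEq.cancel_right_div_gcd hp h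

theorem sum_Icc_comp_mul_emod {M : Type*} [AddCommMonoid M] {p q : ℤ} (hp : 0 < p)
    (hpq : gcd p q = 1) (f : ℤ → M) :
    ∑ j ∈ Icc 1 (p - 1), f (j * q % p) = ∑ j ∈ Icc 1 (p - 1), f j := by
  have hemod : ∀ j ∈ Icc 1 (p - 1), j % p = j := fun j hj => by
    rw [mem_Icc] at hj; exact emod_eq_of_lt (by omega) (by omega)
  have hmaps : ∀ j ∈ Icc 1 (p - 1), j * q % p ∈ Icc 1 (p - 1) := by
    intro j hj
    have hne : j * q % p ≠ 0 := fun h0 => by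
      have hj0 : j ≡ 0 [ZMOD p] :=
        ModEq.cancel_right_of_gcd_eq_one hp hpq (by simpa [ModEq] using h0)
      rw [ModEq, zero_emod, hemod j hj] at hj0
      rw [mem_Icc] at hj
      omega
    have hnonneg := emod_nonneg (j * q) hp.ne'
    have hlt := emod_lt_of_pos (j * q) hp
    rw [mem_Icc]; omega
  have hinj : Set.InjOn (fun j => j * q % p) (Icc 1 (p - 1)) := by
    intro j hj k hk hjk
    have hjk' := ModEq.cancel_right_of_gcd_eq_one hp hpq hjk
    rwa [ModEq, hemod j hj, hemod k hk] at hjk'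
  have himage : (Icc 1 (p - 1)).image (fun j => j * q % p) = Icc 1 (p - 1) :=
    eq_of_subset_of_card_le (image_subset_iff.mpr hmaps) (card_image_of_injOn hinj).ge
  rw [← sum_image (f := f) hinj, himage]

theorem mul_ediv_modEq_neg_emod (a p q : ℤ) : p * (a * q / p) ≡ -(a * q % p) [ZMOD q] := by
  have hsplit : p * (a * q / p) = a * q - a * q % p := by rw [emod_def]; ring
  rw [hsplit, ModEq, sub_eq_neg_add, add_mul_emod_self_right]

theorem sq_mul_six_mul_sum_floor_sq_modEq {p q : ℤ} (hp : 0 < p) (hpq : gcd p q = 1) :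
    p ^ 2 * (6 * ∑ j ∈ Icc 1 (p - 1), (j * q / p) ^ 2) ≡ (p - 1) * p * (2 * p - 1) [ZMOD q] :=
  calc p ^ 2 * (6 * ∑ j ∈ Icc 1 (p - 1), (j * q / p) ^ 2)
      = 6 * ∑ j ∈ Icc 1 (p - 1), (p * (j * q / p)) ^ 2 := by
        rw [mul_left_comm, mul_sum]; simp only [mul_pow]
    _ ≡ 6 * ∑ j ∈ Icc 1 (p - 1), (j * q % p) ^ 2 [ZMOD q] := by
        refine ModEq.mul_left _ (ModEq.sum fun j _ => ?_)
        simpa using (mul_ediv_modEq_neg_emod j p q).pow 2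
    _ = 6 * ∑ j ∈ Icc 1 (p - 1), j ^ 2 := by rw [sum_Icc_comp_mul_emod hp hpq (· ^ 2)]
    _ = (p - 1) * p * (2 * p - 1) := by rw [six_mul_sum_Icc_sq (by omega)]; ring

end Int

theorem stmt_10 (p q : ℤ) (hp : 0 < p) (hpq : p < q) (hcop : Int.gcd p q = 1) :
    (∃! p' : ℤ, 0 ≤ p' ∧ p' < q ∧ p * p' ≡ 1 [ZMOD q]) ∧
    (∀ p' : ℤ, 0 ≤ p' → p' < q → p * p' ≡ 1 [ZMOD q] →
      p' ≡ 3 - 2 * p + 6 * ∑ j ∈ Finset.Icc (1 : ℤ) (p - 1), (j * q / p) ^ 2 [ZMOD q]) := by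
  have hq : 0 < q := hp.trans hpq
  refine ⟨Int.existsUnique_mul_modEq_one hq hcop, fun p' _ _ hinv => ?_⟩
  have hsum := Int.sq_mul_six_mul_sum_floor_sq_modEq hp hcop
  lift q to ℕ using hq.le
  rw [← ZMod.intCast_eq_intCast_iff] at hinv hsum ⊢
  push_cast at hinv hsum ⊢
  set T := ∑ j ∈ Icc (1 : ℤ) (p - 1), ((j * q / p : ℤ) : ZMod q) ^ 2
  linear_combination -(p' : ZMod q) ^ 2 * hsum
    + (6 * T * (p * p' + 1) - (p' * (2 * p ^ 2 - 3 * p + 1) + 2 * p - 3)) * hinv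
end

section
/- Let u, v ∈ ℤ² be such that the triangle T = conv{0, u, v} is two-dimensional and contains no lattice points other than its three vertices (i.e., T ∩ ℤ² = {0, u, v}). Then {u, v} is a ℤ-basis of ℤ², i.e., |det(u,v)| = 1. -/
/-!
If `s • u + t • v` is a lattice point, subtracting `⌊s⌋ • u + ⌊t⌋ • v` leaves the lattice point
`p = σ • u + τ • v`, where `σ, τ ∈ [0, 1)` are the fractional parts. If `σ + τ ≤ 1` then `p` lies
in `T`; otherwise its reflection `u + v - p` in the midpoint of `[u, v]` does. Either way, since
the only lattice points of `T` are its vertices, `σ = τ = 0`. Hence every lattice point is an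
integral combination of `u` and `v`, i.e. the integer matrix with columns `u`, `v` maps `ℤ²` onto
itself, and so its determinant is a unit of `ℤ`.
-/

open Set Matrix

section ElementaryTriangle

variable {E : Type*} [AddCommGroup E] [Module ℝ E] {u v : E}

theorem smul_add_smul_mem_convexHull_insert_zero {a b : ℝ} (ha : 0 ≤ a) (hb : 0 ≤ b)
    (hab : a + b ≤ 1) : a • u + b • v ∈ convexHull ℝ ({0, u, v} : Set E) := by
  have h := (convex_convexHull ℝ ({0, u, v} : Set E)).sum_mem (t := Finset.univ)
    (w := ![1 - a - b, a, b]) (z := ![0, u, v]) ?_ ?_ ?_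
  · simpa [Fin.sum_univ_three] using h
  · intro i _; fin_cases i <;> simp <;> linarith
  · simp [Fin.sum_univ_three]; ring
  · intro i _; fin_cases i <;> apply subset_convexHull <;> simp

theorem LinearIndependent.coeffs_of_smul_add_smul_mem_insert_zero
    (hli : LinearIndependent ℝ ![u, v]) {a b : ℝ} (h : a • u + b • v ∈ ({0, u, v} : Set E)) :
    (a = 0 ∧ b = 0) ∨ (a = 1 ∧ b = 0) ∨ (a = 0 ∧ b = 1) := by
  have hli := LinearIndependent.pair_iff.mp hli
  simp only [mem_insert_iff, mem_singleton_iff] at h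
  rcases h with h | h | h
  · exact .inl (hli a b h)
  · have := hli (a - 1) b (by linear_combination (norm := module) h)
    exact .inr (.inl ⟨by linarith [this.1], this.2⟩)
  · have := hli a (b - 1) (by linear_combination (norm := module) h)
    exact .inr (.inr ⟨this.1, by linarith [this.2]⟩)

theorem coeffs_mem_range_intCast_of_convexHull_inter_eq (L : AddSubgroup E)
    (hli : LinearIndependent ℝ ![u, v]) (hu : u ∈ L) (hv : v ∈ L)
    (hT : convexHull ℝ {0, u, v} ∩ L = ({0, u, v} : Set E)) {s t : ℝ}
    (hst : s • u + t • v ∈ L) : s ∈ range Int.cast ∧ t ∈ range Int.cast := by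
  simp only [← Int.fract_eq_zero_iff]
  have vertex {a b : ℝ} (ha : 0 ≤ a) (hb : 0 ≤ b) (hab : a + b ≤ 1) (h : a • u + b • v ∈ L) :
      (a = 0 ∧ b = 0) ∨ (a = 1 ∧ b = 0) ∨ (a = 0 ∧ b = 1) :=
    hli.coeffs_of_smul_add_smul_mem_insert_zero <|
      hT ▸ ⟨smul_add_smul_mem_convexHull_insert_zero ha hb hab, h⟩
  set σ := Int.fract s
  set τ := Int.fract t
  have hσ := Int.fract_nonneg s
  have hσ' := Int.fract_lt_one s
  have hτ := Int.fract_nonneg t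
  have hτ' := Int.fract_lt_one t
  have hfract : σ • u + τ • v ∈ L := by
    have : σ • u + τ • v = s • u + t • v - ⌊s⌋ • u - ⌊t⌋ • v := by
      simp only [σ, τ, Int.fract, sub_smul, Int.cast_smul_eq_zsmul]; abel
    rw [this]
    exact sub_mem (sub_mem hst (L.zsmul_mem hu _)) (L.zsmul_mem hv _)
  rcases le_or_gt (σ + τ) 1 with hle | hgt
  · rcases vertex hσ hτ hle hfract with h | h | h
    · exact h
    all_goals constructor <;> linarith
  · have hrefl : (1 - σ) • u + (1 - τ) • v ∈ L := by
      have : (1 - σ) • u + (1 - τ) • v = u + v - (σ • u + τ • v) := by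
        simp only [sub_smul, one_smul]; abel
      exact this ▸ sub_mem (add_mem hu hv) hfract
    rcases vertex (by linarith) (by linarith) (by linarith) hrefl with h | h | h <;>
      constructor <;> linarith

end ElementaryTriangle

def intLattice (ι : Type*) : AddSubgroup (ι → ℝ) :=
  AddSubgroup.pi univ fun _ => (Int.castAddHom ℝ).range

theorem mem_intLattice {ι : Type*} {x : ι → ℝ} :
    x ∈ intLattice ι ↔ ∀ i, x i ∈ range Int.cast := by
  simp only [intLattice, AddSubgroup.mem_pi, mem_univ, true_implies, AddMonoidHom.mem_range,
    Int.coe_castAddHom, mem_range]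

theorem Matrix.isUnit_det_of_mulVec_mem_intLattice {n : Type*} [Fintype n] [DecidableEq n]
    (A : Matrix n n ℤ) (hA : IsUnit (A.map (Int.cast : ℤ → ℝ)))
    (h : ∀ c, A.map (Int.cast : ℤ → ℝ) *ᵥ c ∈ intLattice n → c ∈ intLattice n) :
    IsUnit A.det := by
  rw [← Matrix.isUnit_iff_isUnit_det, ← Matrix.mulVec_surjective_iff_isUnit]
  intro z
  obtain ⟨c, hc⟩ := Matrix.mulVec_surjective_iff_isUnit.2 hA (Int.cast ∘ z)
  choose m hm using mem_intLattice.1 <| h c <| by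
    rw [hc]; exact mem_intLattice.2 fun i => ⟨z i, rfl⟩
  refine ⟨m, funext fun i => Int.cast_injective (α := ℝ) ?_⟩
  calc ((A *ᵥ m) i : ℝ) = (A.map Int.cast *ᵥ c) i := by
        rw [← funext hm]; exact RingHom.map_mulVec (Int.castRingHom ℝ) A m i
    _ = z i := congrFun hc i

theorem stmt_17 (u v : Fin 2 → ℤ)
    (hdim : Matrix.det !![(u 0 : ℝ), (v 0 : ℝ); (u 1 : ℝ), (v 1 : ℝ)] ≠ 0)
    (hT : convexHull ℝ ({0, (fun i => (u i : ℝ)), (fun i => (v i : ℝ))} : Set (Fin 2 → ℝ)) ∩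
        {x : Fin 2 → ℝ | ∀ i, ∃ m : ℤ, x i = (m : ℝ)}
        = {0, (fun i => (u i : ℝ)), (fun i => (v i : ℝ))}) :
    (Matrix.det !![u 0, v 0; u 1, v 1]).natAbs = 1 := by
  set M := !![(u 0 : ℝ), (v 0 : ℝ); (u 1 : ℝ), (v 1 : ℝ)]
  set u' : Fin 2 → ℝ := fun i => u i
  set v' : Fin 2 → ℝ := fun i => v i
  have hmap : (!![u 0, v 0; u 1, v 1]).map (Int.cast : ℤ → ℝ) = M := by
    ext i j; fin_cases i <;> fin_cases j <;> rfl
  have hcol : M.col = ![u', v'] := by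
    ext j i; fin_cases i <;> fin_cases j <;> rfl
  have hunit : IsUnit M := (isUnit_iff_isUnit_det M).2 hdim.isUnit
  have hli : LinearIndependent ℝ ![u', v'] := hcol ▸ linearIndependent_cols_iff_isUnit.2 hunit
  have hL : (intLattice (Fin 2) : Set (Fin 2 → ℝ)) = {x | ∀ i, ∃ m : ℤ, x i = (m : ℝ)} := by
    ext x; simp [mem_intLattice, eq_comm]
  have hu : u' ∈ intLattice (Fin 2) := mem_intLattice.2 fun i => ⟨u i, rfl⟩
  have hv : v' ∈ intLattice (Fin 2) := mem_intLattice.2 fun i => ⟨v i, rfl⟩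
  rw [← Int.isUnit_iff_natAbs_eq]
  refine isUnit_det_of_mulVec_mem_intLattice _ (hmap ▸ hunit) fun c hc => ?_
  have hcomb : M *ᵥ c = c 0 • u' + c 1 • v' := by
    ext i; fin_cases i <;> simp [M, u', v', mulVec, dotProduct, Fin.sum_univ_two] <;> ring
  rw [hmap, hcomb] at hc
  obtain ⟨h0, h1⟩ := coeffs_mem_range_intCast_of_convexHull_inter_eq _ hli hu hv (hL ▸ hT) hc
  exact mem_intLattice.2 (Fin.forall_fin_two.2 ⟨h0, h1⟩)
end
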